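/- Let A be a finite-dimensional algebra over an algebraically closed field K and let T be a module in mod A with Ext^1_A(T, X) = 0 for every X in Fac T. Suppose 0 → L → T_0 → M → 0 is a short exact sequence in mod A with T_0 in add T and pd_A M ≤ 1. Then Ext^1_A(L, N) = 0 for every N in Fac T; in particular, if L lies in Fac T then L is Ext-projective in Fac T. -/

import Mathlib

/-!
We formalize finitely generated right `A`-modules as finitely generated modules over the
opposite ring `Aᵐᵒᵖ`, working in the category `ModuleCat.{0} Aᵐᵒᵖ`.  Ext-groups are the
`Ext`-groups of Mathlib's derived-category API, and vanishing of an Ext-group is expressed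
as its being a subsingleton.  Projective (resp. injective) dimension bounds are expressed
via the standard characterization by vanishing of Ext-groups in high degrees.
-/

open CategoryTheory

noncomputable instance (R : Type) [Ring R] : HasExt.{1} (ModuleCat.{0} R) := by
  letI : HasDerivedCategory.{1} (ModuleCat.{0} R) := HasDerivedCategory.standard _
  exact hasExt_of_hasDerivedCategory _

/-- `DA = Hom_K(A, K)` as a right `A`-module (i.e. a left `Aᵐᵒᵖ`-module):
`(f · a)(x) = f (a * x)`. -/
noncomputable instance dualModule (K A : Type) [Field K] [Ring A] [Algebra K A] :
    Module Aᵐᵒᵖ (A →ₗ[K] K) where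
  smul a f := f.comp (LinearMap.mulLeft K a.unop)
  one_smul f := by ext x; show f ((1 : Aᵐᵒᵖ).unop * x) = f x; simp
  mul_smul a b f := by
    ext x
    show f ((a * b).unop * x) = f (b.unop * (a.unop * x))
    simp [mul_assoc]
  smul_zero a := by ext x; rfl
  smul_add a f g := by ext x; rfl
  add_smul a b f := by
    ext x
    show f ((a + b).unop * x) = f (a.unop * x) + f (b.unop * x)
    rw [MulOpposite.unop_add, add_mul, map_add]
  zero_smul f := by ext x; show f ((0 : Aᵐᵒᵖ).unop * x) = 0; simp

/-- `Hom_R(T, M)` as a right module over `End_R(T)` (i.e. a left module over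
`(End_R T)ᵐᵒᵖ`), via precomposition. -/
instance endOpModule (R T M : Type) [Ring R] [AddCommGroup T] [Module R T]
    [AddCommGroup M] [Module R M] :
    Module (Module.End R T)ᵐᵒᵖ (T →ₗ[R] M) where
  smul b φ := φ.comp b.unop
  one_smul φ := by ext x; rfl
  mul_smul a b φ := by ext x; rfl
  smul_zero a := by ext x; rfl
  smul_add a φ ψ := by ext x; rfl
  add_smul a b φ := by
    ext x
    show φ ((a + b).unop x) = φ (a.unop x) + φ (b.unop x)
    rw [MulOpposite.unop_add, LinearMap.add_apply, map_add]
  zero_smul φ := by ext x; show φ ((0 : (Module.End R T)ᵐᵒᵖ).unop x) = 0; simp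

variable (R : Type) [Ring R]

/-- `Ext^i(M, N) = 0`. -/
def ExtVanish (M N : ModuleCat.{0} R) (i : ℕ) : Prop :=
  Subsingleton (Abelian.Ext M N i)

/-- `M ∈ Fac T`: `M` is a quotient of a finite direct sum of copies of `T`. -/
def MemFac (T M : ModuleCat.{0} R) : Prop :=
  ∃ (n : ℕ) (f : ModuleCat.of R (Fin n → T) ⟶ M), Function.Surjective f

/-- `N ∈ Sub T`: `N` embeds into a finite direct sum of copies of `T`. -/
def MemSub (T N : ModuleCat.{0} R) : Prop :=
  ∃ (n : ℕ) (f : N ⟶ ModuleCat.of R (Fin n → T)), Function.Injective f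

/-- `X ∈ add T`: `X` is a direct summand of a finite direct sum of copies of `T`. -/
def MemAdd (T X : ModuleCat.{0} R) : Prop :=
  ∃ (n : ℕ) (i : X ⟶ ModuleCat.of R (Fin n → T)) (p : ModuleCat.of R (Fin n → T) ⟶ X),
    i ≫ p = 𝟙 X

/-- The projective dimension of `M` is at most `n`: `Ext^i(M, -) = 0` for all `i > n`. -/
def pdLE (M : ModuleCat.{0} R) (n : ℕ) : Prop :=
  ∀ (N : ModuleCat.{0} R) (i : ℕ), n < i → ExtVanish R M N i

/-- The injective dimension of `M` is at most `n`: `Ext^i(-, M) = 0` for all `i > n`. -/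
def idLE (M : ModuleCat.{0} R) (n : ℕ) : Prop :=
  ∀ (N : ModuleCat.{0} R) (i : ℕ), n < i → ExtVanish R N M i

/-- There is an exact sequence `0 → X → T_0 → ⋯ → T_n → 0` with all `T_i ∈ add T`. -/
def AddCoresol (T : ModuleCat.{0} R) : ModuleCat.{0} R → ℕ → Prop
  | X, 0 => MemAdd R T X
  | X, (n + 1) => ∃ (T₀ : ModuleCat.{0} R) (f : X ⟶ T₀), MemAdd R T T₀ ∧
      Function.Injective f ∧ AddCoresol T (ModuleCat.of R (T₀ ⧸ LinearMap.range f.hom)) n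

/-- There is an exact sequence `0 → T_n → ⋯ → T_0 → X → 0` with all `T_i ∈ add T`. -/
def AddResol (T : ModuleCat.{0} R) : ModuleCat.{0} R → ℕ → Prop
  | X, 0 => MemAdd R T X
  | X, (n + 1) => ∃ (T₀ : ModuleCat.{0} R) (f : T₀ ⟶ X), MemAdd R T T₀ ∧
      Function.Surjective f ∧ AddResol T (ModuleCat.of R (LinearMap.ker f.hom)) n

/-- `T` is a tilting module, where `Reg` is the regular module `A`. -/
def IsTilting (Reg T : ModuleCat.{0} R) : Prop :=
  ∃ n : ℕ, pdLE R T n ∧ (∀ i : ℕ, 1 ≤ i → ExtVanish R T T i) ∧ AddCoresol R T Reg n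

/-- `T` is a cotilting module, where `DA` is the dual of the regular module. -/
def IsCotilting (DA T : ModuleCat.{0} R) : Prop :=
  ∃ n : ℕ, idLE R T n ∧ (∀ i : ℕ, 1 ≤ i → ExtVanish R T T i) ∧ AddResol R T DA n

/-- `T` is τ-rigid: `Ext^1(T, Fac T) = 0`. -/
def TauRigid (T : ModuleCat.{0} R) : Prop :=
  ∀ M : ModuleCat.{0} R, MemFac R T M → ExtVanish R T M 1

/-- `T` is τ⁻¹-rigid: `Ext^1(Sub T, T) = 0`. -/
def TauInvRigid (T : ModuleCat.{0} R) : Prop :=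
  ∀ N : ModuleCat.{0} R, MemSub R T N → ExtVanish R N T 1

/-- `M` is an indecomposable module. -/
def Indec (M : ModuleCat.{0} R) : Prop :=
  Nontrivial M ∧ ∀ (Y Z : ModuleCat.{0} R), Nontrivial Y → Nontrivial Z →
    IsEmpty (M ≃ₗ[R] (Y × Z))

/-- `X` is a direct summand of `T`. -/
def IsSummand (T X : ModuleCat.{0} R) : Prop :=
  ∃ (i : X ⟶ T) (p : T ⟶ X), i ≫ p = 𝟙 X

/-- `T` has exactly `n` pairwise non-isomorphic indecomposable direct summands. -/
def IndecSummandCount (T : ModuleCat.{0} R) (n : ℕ) : Prop :=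
  ∃ M : Fin n → ModuleCat.{0} R,
    (∀ i, Indec R (M i) ∧ IsSummand R T (M i)) ∧
    (∀ i j, Nonempty (M i ≃ₗ[R] M j) → i = j) ∧
    (∀ X : ModuleCat.{0} R, Indec R X → IsSummand R T X → ∃ i, Nonempty (X ≃ₗ[R] M i))


/-!
`Ext^1(-, N)` vanishes on `add T` because it vanishes on `T` and is additive. In the long exact
sequence `Ext^1(T₀, N) → Ext^1(L, N) → Ext^2(M, N)` of `0 → L → T₀ → M → 0`, the outer terms
vanish when `N ∈ Fac T` and `pd M ≤ 1`.
-/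

universe w v u

namespace CategoryTheory.Abelian.Ext

variable {C : Type u} [Category.{v} C] [Abelian C] [HasExt.{w} C]

lemma subsingleton_of_sum_comp_eq_id {X N : C} {n : ℕ} {ι : Type*} [Fintype ι] {Y : ι → C}
    (a : ∀ i, X ⟶ Y i) (b : ∀ i, Y i ⟶ X) (hab : ∑ i, a i ≫ b i = 𝟙 X)
    (hY : ∀ i, Subsingleton (Ext (Y i) N n)) : Subsingleton (Ext X N n) := by
  refine subsingleton_of_forall_eq 0 fun x => ?_
  rw [← mk₀_id_comp x, ← hab, mk₀_sum, sum_comp]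
  refine Finset.sum_eq_zero fun i _ => ?_
  rw [← mk₀_comp_mk₀_assoc, Subsingleton.elim ((mk₀ (b i)).comp x (zero_add n)) 0, comp_zero]

lemma subsingleton_of_shortExact {S : ShortComplex C} (hS : S.ShortExact) (N : C)
    (h₂ : Subsingleton (Ext S.X₂ N 1)) (h₃ : Subsingleton (Ext S.X₃ N 2)) :
    Subsingleton (Ext S.X₁ N 1) := by
  refine subsingleton_of_forall_eq 0 fun x => ?_
  obtain ⟨y, rfl⟩ := contravariant_sequence_exact₁ hS N x rfl (Subsingleton.elim _ _)
  rw [Subsingleton.elim y 0, comp_zero]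

end CategoryTheory.Abelian.Ext

lemma ModuleCat.sum_proj_comp_single (R : Type u) [Ring R] (T : ModuleCat.{v} R) (k : ℕ) :
    ∑ j : Fin k, ModuleCat.ofHom (LinearMap.proj (R := R) (φ := fun _ : Fin k => T) j) ≫
      ModuleCat.ofHom (LinearMap.single R (fun _ : Fin k => T) j) =
      𝟙 (ModuleCat.of R (Fin k → T)) := by
  refine ModuleCat.hom_ext (LinearMap.ext fun v => ?_)
  rw [ModuleCat.hom_sum, LinearMap.coe_sum, Finset.sum_apply]
  exact Finset.univ_sum_single v

lemma extVanish_of_memAdd {R : Type} [Ring R] {T X N : ModuleCat.{0} R} {n : ℕ}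
    (hT : ExtVanish R T N n) (hX : MemAdd R T X) : ExtVanish R X N n := by
  obtain ⟨k, i, p, hip⟩ := hX
  refine Abelian.Ext.subsingleton_of_sum_comp_eq_id
    (fun j => i ≫ ModuleCat.ofHom (LinearMap.proj j))
    (fun j => ModuleCat.ofHom (LinearMap.single R (fun _ : Fin k => T) j) ≫ p) ?_ fun _ => hT
  simp only [Category.assoc]
  rw [← Preadditive.comp_sum]
  simp only [← Category.assoc, ← Preadditive.sum_comp]
  rw [ModuleCat.sum_proj_comp_single, Category.comp_id, hip]

theorem stmt14_general (A : Type) [Ring A]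
    (T : ModuleCat.{0} Aᵐᵒᵖ)
    (hrig : ∀ X : ModuleCat.{0} Aᵐᵒᵖ, MemFac Aᵐᵒᵖ T X → ExtVanish Aᵐᵒᵖ T X 1)
    (L T₀ M : ModuleCat.{0} Aᵐᵒᵖ)
    (f : L ⟶ T₀) (g : T₀ ⟶ M)
    (hf : Function.Injective f) (hg : Function.Surjective g) (hfg : Function.Exact ⇑f ⇑g)
    (hadd : MemAdd Aᵐᵒᵖ T T₀) (hpd : pdLE Aᵐᵒᵖ M 1) :
    ∀ N : ModuleCat.{0} Aᵐᵒᵖ, MemFac Aᵐᵒᵖ T N → ExtVanish Aᵐᵒᵖ L N 1  := by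
  intro N hN
  have hS := ModuleCat.shortComplex_shortExact (ShortComplex.mk f g
    (ModuleCat.hom_ext (LinearMap.ext hfg.apply_apply_eq_zero))) hfg hf hg
  exact Abelian.Ext.subsingleton_of_shortExact hS N (extVanish_of_memAdd (hrig N hN) hadd)
    (hpd N 2 one_lt_two)

/-- Let `T ∈ mod A` with `Ext¹(T, Fac T) = 0`, and let
`0 → L → T₀ → M → 0` be a short exact sequence in `mod A` with `T₀ ∈ add T` and
`pd_A M ≤ 1`.  Then `Ext¹_A(L, N) = 0` for every `N ∈ Fac T`; in particular, if
`L ∈ Fac T` then `L` is Ext-projective in `Fac T`. -/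
theorem stmt14 (K A : Type) [Field K] [IsAlgClosed K] [Ring A] [Algebra K A]
    [FiniteDimensional K A]
    (T : ModuleCat.{0} Aᵐᵒᵖ) (hT : Module.Finite Aᵐᵒᵖ T)
    (hrig : ∀ X : ModuleCat.{0} Aᵐᵒᵖ, MemFac Aᵐᵒᵖ T X → ExtVanish Aᵐᵒᵖ T X 1)
    (L T₀ M : ModuleCat.{0} Aᵐᵒᵖ)
    (hL : Module.Finite Aᵐᵒᵖ L) (hT₀ : Module.Finite Aᵐᵒᵖ T₀) (hM : Module.Finite Aᵐᵒᵖ M)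
    (f : L ⟶ T₀) (g : T₀ ⟶ M)
    (hf : Function.Injective f) (hg : Function.Surjective g) (hfg : Function.Exact ⇑f ⇑g)
    (hadd : MemAdd Aᵐᵒᵖ T T₀) (hpd : pdLE Aᵐᵒᵖ M 1) :
    ∀ N : ModuleCat.{0} Aᵐᵒᵖ, MemFac Aᵐᵒᵖ T N → ExtVanish Aᵐᵒᵖ L N 1 :=
  stmt14_general A T hrig L T₀ M f g hf hg hfg hadd hpd
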